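/- Let Π_1, …, Π_k be a POVM on ℂ^d (positive semidefinite Hermitian d×d matrices with Σ_j Π_j = I). Then for every ensemble E = ((τ_i)_{i=1}^m, (p_i)_{i=1}^m), the mutual information satisfies I(E, Π) ≤ ln k − inf{ H(ρ, Π) : ρ a pure state }, where H(ρ, Π) = Σ_{j=1}^k η(Re tr(ρ Π_j)); consequently the informational power satisfies W(Π) ≤ ln k − inf{ H(ρ, Π) : ρ pure }. -/

import Mathlib

open scoped ComplexOrder
open Matrix Finset Real

/-!
Write `P i j = p i * r i j`, where `r i` is the outcome distribution of `τ i`. The chain rule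
for `η` turns the mutual information into `H(∑ i, p i • r i) - ∑ i, p i * H(r i)`: the first
term is at most `ln k`, and each `H(r i) = H(τ i, Π)` is at least the infimum over pure states,
because the spectral decomposition writes `τ i` as a convex combination of pure states and
`ρ ↦ H(ρ, Π)` is concave, `η` being concave and `ρ ↦ Re tr(ρ Π_j)` affine.
-/

section Entropy

variable {α ι : Type*} [Fintype α] [Fintype ι]

lemma le_sum_mul_of_forall_le {w f : α → ℝ} {c : ℝ} (hw0 : ∀ i, 0 ≤ w i) (hw1 : ∑ i, w i = 1)
    (h : ∀ i, c ≤ f i) : c ≤ ∑ i, w i * f i :=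
  calc c = ∑ i, w i * c := by rw [← sum_mul, hw1, one_mul]
    _ ≤ ∑ i, w i * f i := sum_le_sum fun i _ ↦ mul_le_mul_of_nonneg_left (h i) (hw0 i)

lemma sum_negMulLog_le_log_card {q : ι → ℝ} (hq0 : ∀ j, 0 ≤ q j) (hq1 : ∑ j, q j = 1) :
    ∑ j, negMulLog (q j) ≤ log (Fintype.card ι) := by
  have hk : 0 < (Fintype.card ι : ℝ) := by
    rcases isEmpty_or_nonempty ι with hι | hι
    · simp at hq1
    · exact_mod_cast Fintype.card_pos
  have hJensen := concaveOn_negMulLog.le_map_sum (t := univ) (w := fun _ ↦ (Fintype.card ι : ℝ)⁻¹)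
    (p := q) (fun _ _ ↦ by positivity) (by simp [hk.ne']) (fun j _ ↦ hq0 j)
  have hη : negMulLog (Fintype.card ι : ℝ)⁻¹ = (Fintype.card ι : ℝ)⁻¹ * log (Fintype.card ι) := by
    simp [negMulLog, log_inv]
  simp only [smul_eq_mul, ← mul_sum, hq1, mul_one, hη] at hJensen
  exact le_of_mul_le_mul_left hJensen (inv_pos.2 hk)

lemma sum_sum_negMulLog_mul (p : α → ℝ) {r : α → ι → ℝ} (hr : ∀ i, ∑ j, r i j = 1) :
    ∑ j, ∑ i, negMulLog (p i * r i j) =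
      ∑ i, negMulLog (p i) + ∑ i, p i * ∑ j, negMulLog (r i j) := by
  rw [sum_comm, ← sum_add_distrib]
  refine sum_congr rfl fun i _ ↦ ?_
  simp only [negMulLog_mul, sum_add_distrib, ← sum_mul, ← mul_sum, hr, one_mul]

lemma sum_mul_sum_negMulLog_le {w : α → ℝ} {t : α → ι → ℝ} (hw0 : ∀ v, 0 ≤ w v)
    (hw1 : ∑ v, w v = 1) (ht0 : ∀ v j, 0 ≤ t v j) :
    ∑ v, w v * ∑ j, negMulLog (t v j) ≤ ∑ j, negMulLog (∑ v, w v * t v j) := by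
  simp only [mul_sum]
  rw [sum_comm]
  exact sum_le_sum fun j _ ↦ concaveOn_negMulLog.le_map_sum (fun v _ ↦ hw0 v) hw1
    fun v _ ↦ ht0 v j

noncomputable def mutualInfo (P : α → ι → ℝ) : ℝ :=
  ∑ i, negMulLog (∑ j, P i j) + ∑ j, negMulLog (∑ i, P i j) - ∑ j, ∑ i, negMulLog (P i j)

lemma mutualInfo_mul_le {p : α → ℝ} {r : α → ι → ℝ} {c : ℝ} (hp0 : ∀ i, 0 ≤ p i)
    (hp1 : ∑ i, p i = 1) (hr0 : ∀ i j, 0 ≤ r i j) (hr1 : ∀ i, ∑ j, r i j = 1)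
    (hc : ∀ i, c ≤ ∑ j, negMulLog (r i j)) :
    mutualInfo (fun i j ↦ p i * r i j) ≤ log (Fintype.card ι) - c := by
  have hrow : ∀ i, ∑ j, p i * r i j = p i := fun i ↦ by rw [← mul_sum, hr1, mul_one]
  have hcol : ∑ j, negMulLog (∑ i, p i * r i j) ≤ log (Fintype.card ι) :=
    sum_negMulLog_le_log_card (fun j ↦ sum_nonneg fun i _ ↦ mul_nonneg (hp0 i) (hr0 i j))
      (by rw [sum_comm, sum_congr rfl fun i _ ↦ hrow i, hp1])
  have havg := le_sum_mul_of_forall_le hp0 hp1 hc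
  simp only [mutualInfo, hrow, sum_sum_negMulLog_mul p hr1]
  linarith

end Entropy

section Measurement

variable {n ι : Type*} [Fintype n] [Fintype ι]

def Matrix.IsPureState (ρ : Matrix n n ℂ) : Prop :=
  ρ.IsHermitian ∧ ρ * ρ = ρ ∧ ρ.trace = 1

noncomputable def measurementEntropy (M : ι → Matrix n n ℂ) (ρ : Matrix n n ℂ) : ℝ :=
  ∑ j, negMulLog (ρ * M j).trace.re

def pureStateEntropies (M : ι → Matrix n n ℂ) : Set ℝ :=
  {x | ∃ ρ : Matrix n n ℂ, ρ.IsPureState ∧ x = measurementEntropy M ρ}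

lemma Matrix.PosSemidef.re_trace_mul_nonneg {A B : Matrix n n ℂ} (hA : A.PosSemidef)
    (hB : B.PosSemidef) : 0 ≤ (A * B).trace.re := by
  classical
  open scoped MatrixOrder in
  obtain ⟨S, rfl⟩ := CStarAlgebra.nonneg_iff_eq_star_mul_self.mp hA.nonneg
  rw [trace_mul_cycle, trace_mul_comm, ← mul_assoc]
  exact (RCLike.nonneg_iff.mp (hB.mul_mul_conjTranspose_same S).trace_nonneg).1

lemma Matrix.IsPureState.posSemidef {ρ : Matrix n n ℂ} (hρ : ρ.IsPureState) : ρ.PosSemidef := by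
  have hρ' : ρ = ρᴴ * ρ := by rw [hρ.1.eq, hρ.2.1]
  exact hρ' ▸ posSemidef_conjTranspose_mul_self ρ

variable [DecidableEq n]

lemma Matrix.IsHermitian.exists_eq_sum_smul_isPureState {A : Matrix n n ℂ} (hA : A.IsHermitian) :
    ∃ P : n → Matrix n n ℂ, (∀ v, (P v).IsPureState) ∧
      A = ∑ v, (hA.eigenvalues v : ℂ) • P v := by
  refine ⟨fun v ↦ Unitary.conjStarAlgAut ℂ _ hA.eigenvectorUnitary (single v v 1),
    fun v ↦ ⟨?_, ?_, ?_⟩, ?_⟩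
  · rw [isHermitian_iff_isSelfAdjoint, IsSelfAdjoint, ← map_star, star_eq_conjTranspose,
      conjTranspose_single, star_one]
  · rw [← map_mul, single_mul_single_same, mul_one]
  · dsimp only
    rw [Unitary.conjStarAlgAut_apply, trace_mul_cycle, Unitary.coe_star_mul_self, one_mul,
      trace_single_eq_same]
  · conv_lhs => rw [hA.spectral_theorem, ← sum_single_eq_diagonal]
    simp only [map_sum, ← map_smul, smul_single, smul_eq_mul, mul_one, Function.comp_apply,
      RCLike.ofReal_eq_complex_ofReal]

lemma Matrix.PosSemidef.exists_eq_sum_smul_isPureState {τ : Matrix n n ℂ} (hτ : τ.PosSemidef)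
    (htr : τ.trace = 1) :
    ∃ (w : n → ℝ) (P : n → Matrix n n ℂ), (∀ v, 0 ≤ w v) ∧ ∑ v, w v = 1 ∧
      (∀ v, (P v).IsPureState) ∧ τ = ∑ v, (w v : ℂ) • P v := by
  obtain ⟨P, hP, hτP⟩ := hτ.1.exists_eq_sum_smul_isPureState
  refine ⟨hτ.1.eigenvalues, P, hτ.eigenvalues_nonneg, ?_, hP, hτP⟩
  have htr' := congrArg Complex.re (hτP ▸ htr)
  simpa [trace_sum, (hP _).2.2] using htr'

variable {M : ι → Matrix n n ℂ}

lemma sum_re_trace_mul_eq_one (hM1 : ∑ j, M j = 1) {ρ : Matrix n n ℂ} (htr : ρ.trace = 1) :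
    ∑ j, (ρ * M j).trace.re = 1 := by
  rw [← Complex.re_sum, ← trace_sum, ← mul_sum, hM1, mul_one, htr, Complex.one_re]

lemma measurementEntropy_nonneg (hM0 : ∀ j, (M j).PosSemidef) (hM1 : ∑ j, M j = 1)
    {ρ : Matrix n n ℂ} (hρ : ρ.PosSemidef) (htr : ρ.trace = 1) : 0 ≤ measurementEntropy M ρ := by
  have hprob : ∀ j, 0 ≤ (ρ * M j).trace.re := fun j ↦ hρ.re_trace_mul_nonneg (hM0 j)
  refine sum_nonneg fun j _ ↦ negMulLog_nonneg (hprob j) ?_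
  exact sum_re_trace_mul_eq_one hM1 htr ▸ single_le_sum (fun j _ ↦ hprob j) (mem_univ j)

lemma measurementEntropy_le_log_card (hM0 : ∀ j, (M j).PosSemidef) (hM1 : ∑ j, M j = 1)
    {ρ : Matrix n n ℂ} (hρ : ρ.PosSemidef) (htr : ρ.trace = 1) :
    measurementEntropy M ρ ≤ log (Fintype.card ι) :=
  sum_negMulLog_le_log_card (fun j ↦ hρ.re_trace_mul_nonneg (hM0 j))
    (sum_re_trace_mul_eq_one hM1 htr)

lemma bddBelow_pureStateEntropies (hM0 : ∀ j, (M j).PosSemidef) (hM1 : ∑ j, M j = 1) :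
    BddBelow (pureStateEntropies M) := by
  refine ⟨0, ?_⟩
  rintro x ⟨ρ, hρ, rfl⟩
  exact measurementEntropy_nonneg hM0 hM1 hρ.posSemidef hρ.2.2

lemma sInf_pureStateEntropies_le (hM0 : ∀ j, (M j).PosSemidef) (hM1 : ∑ j, M j = 1)
    {τ : Matrix n n ℂ} (hτ : τ.PosSemidef) (htr : τ.trace = 1) :
    sInf (pureStateEntropies M) ≤ measurementEntropy M τ := by
  obtain ⟨w, P, hw0, hw1, hP, rfl⟩ := hτ.exists_eq_sum_smul_isPureState htr
  have hmix : ∀ j, ((∑ v, (w v : ℂ) • P v) * M j).trace.re = ∑ v, w v * (P v * M j).trace.re :=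
    fun j ↦ by simp [sum_mul, trace_sum, Complex.re_sum, trace_smul]
  calc sInf (pureStateEntropies M) ≤ ∑ v, w v * measurementEntropy M (P v) :=
        le_sum_mul_of_forall_le hw0 hw1 fun v ↦
          csInf_le (bddBelow_pureStateEntropies hM0 hM1) ⟨P v, hP v, rfl⟩
    _ ≤ measurementEntropy M (∑ v, (w v : ℂ) • P v) := by
        simp only [measurementEntropy, hmix]
        exact sum_mul_sum_negMulLog_le hw0 hw1 fun v j ↦
          (hP v).posSemidef.re_trace_mul_nonneg (hM0 j)

lemma sInf_pureStateEntropies_le_log_card (hM0 : ∀ j, (M j).PosSemidef) (hM1 : ∑ j, M j = 1) :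
    sInf (pureStateEntropies M) ≤ log (Fintype.card ι) := by
  rcases (pureStateEntropies M).eq_empty_or_nonempty with hempty | ⟨x, ρ, hρ, rfl⟩
  · rw [hempty, Real.sInf_empty]
    exact log_natCast_nonneg _
  · exact (csInf_le (bddBelow_pureStateEntropies hM0 hM1) ⟨ρ, hρ, rfl⟩).trans
      (measurementEntropy_le_log_card hM0 hM1 hρ.posSemidef hρ.2.2)

lemma mutualInfo_ensemble_le {α : Type*} [Fintype α] (hM0 : ∀ j, (M j).PosSemidef)
    (hM1 : ∑ j, M j = 1) {τ : α → Matrix n n ℂ} {p : α → ℝ} (hτ : ∀ i, (τ i).PosSemidef)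
    (htr : ∀ i, (τ i).trace = 1) (hp0 : ∀ i, 0 ≤ p i) (hp1 : ∑ i, p i = 1) :
    mutualInfo (fun i j ↦ p i * (τ i * M j).trace.re) ≤
      log (Fintype.card ι) - sInf (pureStateEntropies M) :=
  mutualInfo_mul_le hp0 hp1 (fun i j ↦ (hτ i).re_trace_mul_nonneg (hM0 j))
    (fun i ↦ sum_re_trace_mul_eq_one hM1 (htr i))
    fun i ↦ sInf_pureStateEntropies_le hM0 hM1 (hτ i) (htr i)

end Measurement

theorem stmt_6_general {d k : ℕ}
    (Pov : Fin k → Matrix (Fin d) (Fin d) ℂ)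
    (hpos : ∀ j, (Pov j).PosSemidef)
    (hsum : ∑ j, Pov j = 1) :
    (∀ (m : ℕ) (τ : Fin m → Matrix (Fin d) (Fin d) ℂ) (p : Fin m → ℝ),
      (∀ i, (τ i).PosSemidef) → (∀ i, (τ i).trace = 1) →
      (∀ i, 0 ≤ p i) → ∑ i, p i = 1 →
      (∑ i, Real.negMulLog (∑ j, p i * ((τ i * Pov j).trace).re)
        + ∑ j, Real.negMulLog (∑ i, p i * ((τ i * Pov j).trace).re)
        - ∑ j, ∑ i, Real.negMulLog (p i * ((τ i * Pov j).trace).re))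
      ≤ Real.log k -
        sInf {x : ℝ | ∃ ρ : Matrix (Fin d) (Fin d) ℂ,
          (ρ.IsHermitian ∧ ρ * ρ = ρ ∧ ρ.trace = 1) ∧
          x = ∑ j, Real.negMulLog (((ρ * Pov j).trace).re)}) ∧
    sSup {x : ℝ | ∃ (m : ℕ) (τ : Fin m → Matrix (Fin d) (Fin d) ℂ) (p : Fin m → ℝ),
        (∀ i, (τ i).PosSemidef) ∧ (∀ i, (τ i).trace = 1) ∧
        (∀ i, 0 ≤ p i) ∧ ∑ i, p i = 1 ∧
        x = ∑ i, Real.negMulLog (∑ j, p i * ((τ i * Pov j).trace).re)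
          + ∑ j, Real.negMulLog (∑ i, p i * ((τ i * Pov j).trace).re)
          - ∑ j, ∑ i, Real.negMulLog (p i * ((τ i * Pov j).trace).re)}
      ≤ Real.log k -
        sInf {x : ℝ | ∃ ρ : Matrix (Fin d) (Fin d) ℂ,
          (ρ.IsHermitian ∧ ρ * ρ = ρ ∧ ρ.trace = 1) ∧
          x = ∑ j, Real.negMulLog (((ρ * Pov j).trace).re)} := by
  have hI := fun (m : ℕ) (τ : Fin m → Matrix (Fin d) (Fin d) ℂ) (p : Fin m → ℝ) ↦
    mutualInfo_ensemble_le (τ := τ) (p := p) hpos hsum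
  simp only [Fintype.card_fin] at hI
  have hinf := sInf_pureStateEntropies_le_log_card hpos hsum
  rw [Fintype.card_fin] at hinf
  refine ⟨hI, Real.sSup_le ?_ (sub_nonneg.2 hinf)⟩
  rintro x ⟨m, τ, p, hτ, htr, hp0, hp1, rfl⟩
  exact hI m τ p hτ htr hp0 hp1

/-- For any POVM `Π` on `ℂ^d`, the mutual information of any ensemble is bounded by
`ln k` minus the infimum of the entropy of measurement over pure states; consequently
the informational power obeys the same bound. -/
theorem stmt_6 {d k : ℕ} (hd : 0 < d) (hk : 0 < k)
    (Pov : Fin k → Matrix (Fin d) (Fin d) ℂ)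
    (hpos : ∀ j, (Pov j).PosSemidef)
    (hsum : ∑ j, Pov j = 1) :
    (∀ (m : ℕ) (τ : Fin m → Matrix (Fin d) (Fin d) ℂ) (p : Fin m → ℝ),
      (∀ i, (τ i).PosSemidef) → (∀ i, (τ i).trace = 1) →
      (∀ i, 0 ≤ p i) → ∑ i, p i = 1 →
      (∑ i, Real.negMulLog (∑ j, p i * ((τ i * Pov j).trace).re)
        + ∑ j, Real.negMulLog (∑ i, p i * ((τ i * Pov j).trace).re)
        - ∑ j, ∑ i, Real.negMulLog (p i * ((τ i * Pov j).trace).re))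
      ≤ Real.log k -
        sInf {x : ℝ | ∃ ρ : Matrix (Fin d) (Fin d) ℂ,
          (ρ.IsHermitian ∧ ρ * ρ = ρ ∧ ρ.trace = 1) ∧
          x = ∑ j, Real.negMulLog (((ρ * Pov j).trace).re)}) ∧
    sSup {x : ℝ | ∃ (m : ℕ) (τ : Fin m → Matrix (Fin d) (Fin d) ℂ) (p : Fin m → ℝ),
        (∀ i, (τ i).PosSemidef) ∧ (∀ i, (τ i).trace = 1) ∧
        (∀ i, 0 ≤ p i) ∧ ∑ i, p i = 1 ∧
        x = ∑ i, Real.negMulLog (∑ j, p i * ((τ i * Pov j).trace).re)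
          + ∑ j, Real.negMulLog (∑ i, p i * ((τ i * Pov j).trace).re)
          - ∑ j, ∑ i, Real.negMulLog (p i * ((τ i * Pov j).trace).re)}
      ≤ Real.log k -
        sInf {x : ℝ | ∃ ρ : Matrix (Fin d) (Fin d) ℂ,
          (ρ.IsHermitian ∧ ρ * ρ = ρ ∧ ρ.trace = 1) ∧
          x = ∑ j, Real.negMulLog (((ρ * Pov j).trace).re)} :=
  stmt_6_general Pov hpos hsum
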